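/- Let X be a nonnegative random variable with E[X] ∈ (0,∞), α ∈ (0,1), and Y a nonnegative random variable with E[e^{-uY}] = E[e^{-(Γ(1-α)/α) u^α X}] for all u ≥ 0. Then E[Y^α] = +∞. -/

import Mathlib

/-!
If `E[Y^α] < ∞`, the bound `1 - e^{-t} ≤ t^α` and dominated convergence give
`(1 - E[e^{-uY}]) / u^α → 0` as `u → 0+`. On the other side `(1 - E[e^{-sX}]) / s → E[X]`, so
with `s = c u^α`, `c = Γ(1-α)/α`, the Laplace identity forces `c E[X] = 0`, contradicting
`E[X] > 0`.
-/

open MeasureTheory Real Set Filter Topology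

lemma one_sub_exp_neg_nonneg {t : ℝ} (ht : 0 ≤ t) : 0 ≤ 1 - exp (-t) := by
  simpa using exp_le_one_iff.mpr (neg_nonpos.mpr ht)

lemma one_sub_exp_neg_le (t : ℝ) : 1 - exp (-t) ≤ t := by
  linarith [one_sub_le_exp_neg t]

lemma one_sub_exp_neg_le_rpow {t β : ℝ} (ht : 0 ≤ t) (hβ0 : 0 ≤ β) (hβ1 : β ≤ 1) :
    1 - exp (-t) ≤ t ^ β := by
  rcases le_or_gt t 1 with h1 | h1
  · calc 1 - exp (-t) ≤ t := one_sub_exp_neg_le t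
      _ = t ^ (1 : ℝ) := (rpow_one t).symm
      _ ≤ t ^ β := rpow_le_rpow_of_exponent_ge' ht h1 hβ0 hβ1
  · linarith [exp_nonneg (-t), one_le_rpow h1.le hβ0]

section Laplace

variable {Ω : Type*} [MeasurableSpace Ω] {P : Measure Ω}

lemma integrable_exp_neg_of_nonneg [IsFiniteMeasure P] {f : Ω → ℝ}
    (hf : AEStronglyMeasurable f P) (h0 : 0 ≤ᵐ[P] f) :
    Integrable (fun ω ↦ exp (-f ω)) P :=
  .of_bound (continuous_exp.comp_aestronglyMeasurable hf.neg) 1 <| h0.mono fun ω hω ↦ by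
    simpa [abs_of_nonneg (exp_nonneg _)] using hω

lemma integral_one_sub_exp_neg_div [IsProbabilityMeasure P] {f : Ω → ℝ}
    (hf : AEStronglyMeasurable f P) (h0 : 0 ≤ᵐ[P] f) (v : ℝ) :
    ∫ ω, (1 - exp (-f ω)) / v ∂P = (1 - ∫ ω, exp (-f ω) ∂P) / v := by
  rw [integral_div, integral_sub (integrable_const 1) (integrable_exp_neg_of_nonneg hf h0),
    integral_const, probReal_univ, one_smul]

variable [IsProbabilityMeasure P]

theorem tendsto_one_sub_integral_exp_neg_div_rpow {Y : Ω → ℝ}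
    (hYm : AEStronglyMeasurable Y P) (hY : 0 ≤ᵐ[P] Y) {α : ℝ} (hα0 : 0 ≤ α) (hα1 : α < 1)
    (hYα : Integrable (fun ω ↦ Y ω ^ α) P) :
    Tendsto (fun u ↦ (1 - ∫ ω, exp (-(u * Y ω)) ∂P) / u ^ α) (𝓝[>] 0) (𝓝 0) := by
  have hbound : ∀ᶠ u in 𝓝[>] (0 : ℝ), ∀ᵐ ω ∂P,
      ‖(1 - exp (-(u * Y ω))) / u ^ α‖ ≤ Y ω ^ α := by
    filter_upwards [self_mem_nhdsWithin] with u (hu : 0 < u)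
    filter_upwards [hY] with ω hω
    have hut : 0 ≤ u * Y ω := mul_nonneg hu.le hω
    rw [norm_of_nonneg (div_nonneg (one_sub_exp_neg_nonneg hut) (by positivity)),
      div_le_iff₀ (by positivity), mul_comm (Y ω ^ α), ← mul_rpow hu.le hω]
    exact one_sub_exp_neg_le_rpow hut hα0 hα1.le
  have hlim : ∀ᵐ ω ∂P,
      Tendsto (fun u ↦ (1 - exp (-(u * Y ω))) / u ^ α) (𝓝[>] 0) (𝓝 0) := by
    filter_upwards [hY] with y hy
    have hpow : Tendsto (fun u : ℝ ↦ u ^ (1 - α) * Y y) (𝓝[>] 0) (𝓝 0) := by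
      have := ((continuous_rpow_const (sub_nonneg.mpr hα1.le)).tendsto 0).mul_const (Y y)
      rw [zero_rpow (sub_pos.mpr hα1).ne', zero_mul] at this
      exact this.mono_left nhdsWithin_le_nhds
    refine squeeze_zero' ?_ ?_ hpow
    · filter_upwards [self_mem_nhdsWithin] with u (hu : 0 < u)
      exact div_nonneg (one_sub_exp_neg_nonneg (mul_nonneg hu.le hy)) (by positivity)
    · filter_upwards [self_mem_nhdsWithin] with u (hu : 0 < u)
      rw [div_le_iff₀ (by positivity), mul_right_comm, ← rpow_add hu, sub_add_cancel, rpow_one]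
      exact one_sub_exp_neg_le (u * Y y)
  have := tendsto_integral_filter_of_dominated_convergence _
    (Eventually.of_forall fun u ↦ by fun_prop) hbound hYα hlim
  rw [integral_zero] at this
  refine this.congr' ?_
  filter_upwards [self_mem_nhdsWithin] with u (hu : 0 < u)
  exact integral_one_sub_exp_neg_div (hYm.const_mul u) (hY.mono fun ω hω ↦ mul_nonneg hu.le hω) _

theorem tendsto_one_sub_integral_exp_neg_div {X : Ω → ℝ} (hXint : Integrable X P)
    (hX : 0 ≤ᵐ[P] X) :
    Tendsto (fun s ↦ (1 - ∫ ω, exp (-(s * X ω)) ∂P) / s) (𝓝[>] 0) (𝓝 (∫ ω, X ω ∂P)) := by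
  have hbound : ∀ᶠ s in 𝓝[>] (0 : ℝ), ∀ᵐ ω ∂P, ‖(1 - exp (-(s * X ω))) / s‖ ≤ X ω := by
    filter_upwards [self_mem_nhdsWithin] with s (hs : 0 < s)
    filter_upwards [hX] with ω hω
    have hst : 0 ≤ s * X ω := mul_nonneg hs.le hω
    rw [norm_of_nonneg (div_nonneg (one_sub_exp_neg_nonneg hst) hs.le), div_le_iff₀ hs,
      mul_comm]
    exact one_sub_exp_neg_le _
  have hlim : ∀ ω, Tendsto (fun s ↦ (1 - exp (-(s * X ω))) / s) (𝓝[>] 0) (𝓝 (X ω)) := by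
    intro ω
    have hderiv : HasDerivAt (fun s ↦ 1 - exp (-(s * X ω))) (X ω) 0 := by
      simpa using (((hasDerivAt_id (0 : ℝ)).mul_const (X ω)).neg.exp).const_sub 1
    simpa [div_eq_inv_mul] using hderiv.tendsto_slope_zero_right
  have := tendsto_integral_filter_of_dominated_convergence _
    (Eventually.of_forall fun s ↦ by fun_prop) hbound hXint (ae_of_all _ hlim)
  refine this.congr' ?_
  filter_upwards [self_mem_nhdsWithin] with s (hs : 0 < s)
  exact integral_one_sub_exp_neg_div (hXint.aestronglyMeasurable.const_mul s)
    (hX.mono fun ω hω ↦ mul_nonneg hs.le hω) _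

end Laplace

theorem stmt3_general {Ω : Type*} [MeasurableSpace Ω] (P : Measure Ω) [IsProbabilityMeasure P]
    (X Y : Ω → ℝ) (hYm : Measurable Y)
    (hX : ∀ ω, 0 ≤ X ω) (hY : ∀ ω, 0 ≤ Y ω)
    (hXint : Integrable X P) (hXpos : 0 < ∫ ω, X ω ∂P)
    (α : ℝ) (hα : α ∈ Set.Ioo (0:ℝ) 1)
    (hLap : ∀ u : ℝ, 0 ≤ u →
      ∫ ω, Real.exp (-(u * Y ω)) ∂P
        = ∫ ω, Real.exp (-(Real.Gamma (1 - α) / α * u ^ α * X ω)) ∂P) :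
    ∫⁻ ω, ENNReal.ofReal (Y ω ^ α) ∂P = ⊤ := by
  obtain ⟨hα0, hα1⟩ := hα
  set c := Gamma (1 - α) / α
  have hc : 0 < c := div_pos (Gamma_pos_of_pos (by linarith)) hα0
  by_contra hfin
  have hYα : Integrable (fun ω ↦ Y ω ^ α) P :=
    ⟨(hYm.pow_const α).aestronglyMeasurable,
      (hasFiniteIntegral_iff_ofReal (ae_of_all _ fun ω ↦ rpow_nonneg (hY ω) α)).mpr
        (lt_top_iff_ne_top.mpr hfin)⟩
  have hYlim := tendsto_one_sub_integral_exp_neg_div_rpow hYm.aestronglyMeasurable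
    (ae_of_all _ hY) hα0.le hα1 hYα
  have hscale : Tendsto (fun u : ℝ ↦ c * u ^ α) (𝓝[>] 0) (𝓝[>] 0) := by
    refine tendsto_nhdsWithin_iff.mpr ⟨?_, ?_⟩
    · simpa [zero_rpow hα0.ne'] using
        (((continuous_rpow_const hα0.le).tendsto 0).const_mul c).mono_left nhdsWithin_le_nhds
    · filter_upwards [self_mem_nhdsWithin] with u (hu : 0 < u)
      exact mul_pos hc (rpow_pos_of_pos hu α)
  have hXlim := ((tendsto_one_sub_integral_exp_neg_div hXint (ae_of_all _ hX)).comp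
    hscale).const_mul c
  have hlimits : c * ∫ ω, X ω ∂P = 0 := by
    refine tendsto_nhds_unique (hXlim.congr' ?_) hYlim
    filter_upwards [self_mem_nhdsWithin] with u (hu : 0 < u)
    rw [Function.comp_apply, ← hLap u hu.le, ← mul_div_assoc, mul_div_mul_left _ _ hc.ne']
  exact (mul_pos hc hXpos).ne' hlimits

theorem stmt3 {Ω : Type*} [MeasurableSpace Ω] (P : Measure Ω) [IsProbabilityMeasure P]
    (X Y : Ω → ℝ) (hXm : Measurable X) (hYm : Measurable Y)
    (hX : ∀ ω, 0 ≤ X ω) (hY : ∀ ω, 0 ≤ Y ω)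
    (hXint : Integrable X P) (hXpos : 0 < ∫ ω, X ω ∂P)
    (α : ℝ) (hα : α ∈ Set.Ioo (0:ℝ) 1)
    (hLap : ∀ u : ℝ, 0 ≤ u →
      ∫ ω, Real.exp (-(u * Y ω)) ∂P
        = ∫ ω, Real.exp (-(Real.Gamma (1 - α) / α * u ^ α * X ω)) ∂P) :
    ∫⁻ ω, ENNReal.ofReal (Y ω ^ α) ∂P = ⊤ :=
  stmt3_general P X Y hYm hX hY hXint hXpos α hα hLap
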